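/- Let Ψ_λ(z; r) be the derivative in z of the Moreau-type regularization ρ(z; r) = min_x { r ρ_λ(x) + (1/2)(x − z)² }, where ρ_λ is the Huber loss. Then Ψ_λ(z; r) = r · ψ_λ(z/(1+r)) for all z ∈ ℝ and r > 0. -/

import Mathlib

/-- Huber loss function. -/
noncomputable def huberLoss (lam z : ℝ) : ℝ :=
  if |z| ≤ lam then z ^ 2 / 2 else lam * |z| - lam ^ 2 / 2

/-- Huber score function. -/
noncomputable def huberScore (lam x : ℝ) : ℝ := min lam (max (-lam) x)

/-- Moreau-type regularization of the Huber loss. -/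
noncomputable def regHuberLoss (lam r z : ℝ) : ℝ :=
  ⨅ x : ℝ, (r * huberLoss lam x + (x - z) ^ 2 / 2)

/-!
`ρ(·; r)` is the Moreau envelope of `r ρ_λ`. If the proximal point `p z` (the minimiser in
the infimum) depends continuously on `z`, the envelope has derivative `z - p z`: comparing with
the minimisers at `z` and at `z'` traps `ρ(z') - ρ(z)` between `(z' - p z') (z' - z)` and
`(z - p z) (z' - z)` up to `(z' - z)² / 2`. For the Huber loss, `p z = z - r ψ_λ(z / (1 + r))`;
this follows from the Fenchel–Young inequality `t x - t² / 2 ≤ ρ_λ(x)` for `|t| ≤ λ`, which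
is an equality at `t = ψ_λ(x)`, together with `ψ_λ(p z) = ψ_λ(z / (1 + r))`.
-/

open Filter Topology

lemma huberScore_of_le_neg {lam x : ℝ} (hlam : 0 ≤ lam) (hx : x ≤ -lam) :
    huberScore lam x = -lam := by
  rw [huberScore, max_eq_left hx, min_eq_right (by linarith)]

lemma huberScore_of_le {lam x : ℝ} (hx : lam ≤ x) : huberScore lam x = lam :=
  min_eq_left (le_max_of_le_right hx)

lemma huberScore_of_abs_le {lam x : ℝ} (hx : |x| ≤ lam) : huberScore lam x = x := by
  rw [abs_le] at hx
  rw [huberScore, max_eq_right hx.1, min_eq_right hx.2]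

lemma abs_huberScore_le {lam : ℝ} (hlam : 0 ≤ lam) (x : ℝ) : |huberScore lam x| ≤ lam :=
  abs_le.2 ⟨le_min (by linarith) (le_max_left _ _), min_le_left _ _⟩

lemma continuous_huberScore (lam : ℝ) : Continuous (huberScore lam) :=
  continuous_const.min (continuous_const.max continuous_id)

lemma huberScore_add_mul_sub_huberScore {lam : ℝ} (hlam : 0 ≤ lam) (w : ℝ) {c : ℝ}
    (hc : 0 ≤ c) : huberScore lam (w + c * (w - huberScore lam w)) = huberScore lam w := by
  rcases le_or_gt w (-lam) with hw | hw
  · rw [huberScore_of_le_neg hlam hw]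
    exact huberScore_of_le_neg hlam (by nlinarith)
  rcases le_or_gt lam w with hw' | hw'
  · rw [huberScore_of_le hw']
    exact huberScore_of_le (by nlinarith)
  · have hw_abs : |w| ≤ lam := abs_le.2 ⟨hw.le, hw'.le⟩
    rw [huberScore_of_abs_le hw_abs, sub_self, mul_zero, add_zero, huberScore_of_abs_le hw_abs]

lemma huberLoss_eq_huberScore_mul_sub {lam : ℝ} (hlam : 0 ≤ lam) (x : ℝ) :
    huberLoss lam x = huberScore lam x * x - huberScore lam x ^ 2 / 2 := by
  by_cases hx : |x| ≤ lam
  · rw [huberLoss, if_pos hx, huberScore_of_abs_le hx]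
    ring
  rw [huberLoss, if_neg hx]
  rcases le_or_gt x 0 with hx0 | hx0
  · rw [abs_of_nonpos hx0] at hx ⊢
    rw [huberScore_of_le_neg hlam (by linarith)]
    ring
  · rw [abs_of_pos hx0] at hx ⊢
    rw [huberScore_of_le (by linarith)]

lemma mul_sub_sq_div_two_le_huberLoss {lam t : ℝ} (ht : |t| ≤ lam) (x : ℝ) :
    t * x - t ^ 2 / 2 ≤ huberLoss lam x := by
  have htx : t * x ≤ |t| * |x| := (le_abs_self _).trans (abs_mul t x).le
  rw [huberLoss]
  split_ifs with hx
  · nlinarith [sq_nonneg (x - t)]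
  · rw [not_le] at hx
    nlinarith [sq_abs t, mul_nonneg (sub_nonneg.2 ht) (sub_nonneg.2 hx.le)]

lemma abs_sub_sub_mul_le_of_sandwich {f g : ℝ → ℝ} {x y C : ℝ}
    (hupper : f y - f x ≤ g x * (y - x) + C * (y - x) ^ 2)
    (hlower : g y * (y - x) - C * (y - x) ^ 2 ≤ f y - f x) :
    |f y - f x - (y - x) * g x| ≤ (|g y - g x| + |C| * |y - x|) * |y - x| := by
  have hg := neg_abs_le ((g y - g x) * (y - x))
  have hC := abs_le.1 (le_refl |C * (y - x) ^ 2|)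
  have hC_abs : |C * (y - x) ^ 2| = |C| * |y - x| * |y - x| := by
    rw [abs_mul, abs_pow, mul_assoc, sq]
  rw [abs_mul] at hg
  rw [hC_abs] at hC
  rw [abs_le]
  constructor
  · linarith
  · nlinarith [abs_nonneg (g y - g x), abs_nonneg (y - x)]

lemma hasDerivAt_of_sandwich {f g : ℝ → ℝ} {x C : ℝ} (hg : ContinuousAt g x)
    (hupper : ∀ y, f y - f x ≤ g x * (y - x) + C * (y - x) ^ 2)
    (hlower : ∀ y, g y * (y - x) - C * (y - x) ^ 2 ≤ f y - f x) :
    HasDerivAt f (g x) x := by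
  rw [hasDerivAt_iff_tendsto]
  refine squeeze_zero (g := fun y => |g y - g x| + |C| * |y - x|) (fun _ => by positivity)
    (fun y => ?_) ?_
  · simp only [Real.norm_eq_abs, smul_eq_mul]
    rcases eq_or_ne y x with rfl | hyx
    · simp
    · rw [inv_mul_le_iff₀ (abs_pos.2 (sub_ne_zero.2 hyx)), mul_comm |y - x|]
      exact abs_sub_sub_mul_le_of_sandwich (hupper y) (hlower y)
  · have hg0 : Tendsto (fun y => g y - g x) (𝓝 x) (𝓝 0) := by
      simpa using hg.tendsto.sub_const (g x)
    have hid0 : Tendsto (fun y => y - x) (𝓝 x) (𝓝 0) := by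
      simpa using (continuous_id.tendsto x).sub_const x
    simpa using hg0.abs.add (hid0.abs.const_mul |C|)

noncomputable def moreauEnvelope (f : ℝ → ℝ) (z : ℝ) : ℝ := ⨅ x, f x + (x - z) ^ 2 / 2

section moreauEnvelope

variable {f p : ℝ → ℝ}

lemma moreauEnvelope_eq
    (hp : ∀ z x, f (p z) + (p z - z) ^ 2 / 2 ≤ f x + (x - z) ^ 2 / 2) (z : ℝ) :
    moreauEnvelope f z = f (p z) + (p z - z) ^ 2 / 2 :=
  IsGLB.ciInf_eq (IsLeast.isGLB ⟨Set.mem_range_self _, Set.forall_mem_range.2 (hp z)⟩)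

lemma moreauEnvelope_le
    (hp : ∀ z x, f (p z) + (p z - z) ^ 2 / 2 ≤ f x + (x - z) ^ 2 / 2) (x y : ℝ) :
    moreauEnvelope f y ≤ f x + (x - y) ^ 2 / 2 := by
  rw [moreauEnvelope_eq hp y]
  exact hp y x

lemma hasDerivAt_moreauEnvelope
    (hp : ∀ z x, f (p z) + (p z - z) ^ 2 / 2 ≤ f x + (x - z) ^ 2 / 2)
    {z : ℝ} (hpz : ContinuousAt p z) :
    HasDerivAt (moreauEnvelope f) (z - p z) z := by
  refine hasDerivAt_of_sandwich (g := fun z => z - p z) (C := 1 / 2)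
    (continuousAt_id.sub hpz) (fun y => ?_) (fun y => ?_)
  · have := moreauEnvelope_le hp (p z) y
    rw [moreauEnvelope_eq hp z]
    nlinarith
  · have := moreauEnvelope_le hp (p y) z
    rw [moreauEnvelope_eq hp y]
    nlinarith

end moreauEnvelope

lemma regHuberLoss_eq_moreauEnvelope (lam r : ℝ) :
    regHuberLoss lam r = moreauEnvelope (fun x => r * huberLoss lam x) :=
  rfl

lemma huberObjective_prox_le {lam r : ℝ} (hlam : 0 ≤ lam) (hr : 0 ≤ r) (z x : ℝ) :
    r * huberLoss lam (z - r * huberScore lam (z / (1 + r)))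
        + (z - r * huberScore lam (z / (1 + r)) - z) ^ 2 / 2
      ≤ r * huberLoss lam x + (x - z) ^ 2 / 2 := by
  set w := z / (1 + r)
  set s := huberScore lam w
  have hprox : z - r * s = w + r * (w - s) := by
    have : z = (1 + r) * w := (mul_div_cancel₀ z (by positivity)).symm
    rw [this]; ring
  have hscore : huberScore lam (z - r * s) = s :=
    hprox ▸ huberScore_add_mul_sub_huberScore hlam w hr
  have hloss : huberLoss lam (z - r * s) = s * (z - r * s) - s ^ 2 / 2 := by
    rw [huberLoss_eq_huberScore_mul_sub hlam, hscore]
  have hyoung := mul_sub_sq_div_two_le_huberLoss (abs_huberScore_le hlam w) x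
  rw [hloss]
  nlinarith [mul_le_mul_of_nonneg_left hyoung hr, sq_nonneg (x - z + r * s)]

/-- The derivative in z of the regularized Huber loss equals
r · ψ_λ(z/(1+r)). -/
theorem regHuberScore_eq (lam r : ℝ) (hlam : 0 < lam) (hr : 0 < r) :
    ∀ z : ℝ, HasDerivAt (regHuberLoss lam r)
      (r * huberScore lam (z / (1 + r))) z := by
  intro z
  have hprox_cont : Continuous fun z => z - r * huberScore lam (z / (1 + r)) :=
    continuous_id.sub (continuous_const.mul ((continuous_huberScore lam).comp
      (continuous_id.div_const _)))
  have h := hasDerivAt_moreauEnvelope (f := fun x => r * huberLoss lam x)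
    (huberObjective_prox_le hlam.le hr.le) hprox_cont.continuousAt (z := z)
  rwa [sub_sub_cancel, ← regHuberLoss_eq_moreauEnvelope] at h
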